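/- Let X_1, …, X_K be square-integrable real random variables on a common probability space, with means μ_i := E[X_i], and set V_{ij} := Var(X_i − X_j). Define Λ_{ij} ∈ [0, ∞] by Λ_{ij} := V_{ij}/(μ_j − μ_i)² + 3/(μ_j − μ_i) if μ_j > μ_i and Λ_{ij} := +∞ otherwise. Then for all i, j, k ∈ {1, …, K}: Λ_{ij} ≤ max{Λ_{ik}, Λ_{kj}}. -/

import Mathlib

/-!
Write `σ_ij = √Var(X_i - X_j)` and `d_ij = μ_j - μ_i`, and assume `d_ik, d_kj > 0` (otherwise the
right-hand side is `∞`). Being the `L²` norm of a centred difference, `σ` satisfies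
`σ_ij ≤ σ_ik + σ_kj`, while `d_ij = d_ik + d_kj` exactly. Sedrakyan's form of Cauchy–Schwarz
then gives `V_ij / d_ij ≤ V_ik / d_ik + V_kj / d_kj`, hence
`d_ij Λ_ij ≤ d_ik Λ_ik + d_kj Λ_kj - 3`: `Λ_ij` lies below a weighted mean of `Λ_ik` and `Λ_kj`.
-/

open MeasureTheory ProbabilityTheory ENNReal

namespace ProbabilityTheory

variable {Ω : Type*} [MeasurableSpace Ω] {μ : Measure Ω} {X Y : Ω → ℝ}

lemma evariance_eq_eLpNorm_sq (X : Ω → ℝ) (μ : Measure Ω) :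
    eVar[X; μ] = eLpNorm (fun ω ↦ X ω - μ[X]) 2 μ ^ 2 := by
  rw [evariance, eLpNorm_eq_lintegral_rpow_enorm_toReal two_ne_zero ofNat_ne_top,
    ← ENNReal.rpow_natCast, ← ENNReal.rpow_mul]
  norm_num

lemma sqrt_variance_eq_lpNorm (hX : AEStronglyMeasurable X μ) :
    √Var[X; μ] = lpNorm (fun ω ↦ X ω - μ[X]) 2 μ := by
  rw [variance, evariance_eq_eLpNorm_sq, toReal_pow, Real.sqrt_sq toReal_nonneg,
    toReal_eLpNorm (by fun_prop)]

lemma sqrt_variance_add_le [IsFiniteMeasure μ] (hX : MemLp X 2 μ) (hY : MemLp Y 2 μ) :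
    √Var[X + Y; μ] ≤ √Var[X; μ] + √Var[Y; μ] := by
  have hcentre : (fun ω ↦ (X + Y) ω - μ[X + Y])
      = (fun ω ↦ X ω - μ[X]) + fun ω ↦ Y ω - μ[Y] := by
    ext ω
    simp only [integral_add (hX.integrable one_le_two) (hY.integrable one_le_two), Pi.add_apply]
    ring
  rw [sqrt_variance_eq_lpNorm (hX.add hY).1, sqrt_variance_eq_lpNorm hX.1,
    sqrt_variance_eq_lpNorm hY.1, hcentre]
  exact lpNorm_add_le (hX.sub (memLp_const _)) one_le_two

end ProbabilityTheory

lemma div_sq_add_div_le_max {v v₁ v₂ a b c : ℝ} (hv : 0 ≤ v) (hv₁ : 0 ≤ v₁) (hv₂ : 0 ≤ v₂)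
    (hsqrt : √v ≤ √v₁ + √v₂) (ha : 0 < a) (hb : 0 < b) (hc : 0 ≤ c) :
    v / (a + b) ^ 2 + c / (a + b) ≤ max (v₁ / a ^ 2 + c / a) (v₂ / b ^ 2 + c / b) := by
  have hv_le : v ≤ (√v₁ + √v₂) ^ 2 := by
    rw [← Real.sq_sqrt hv]
    gcongr
  have hsedrakyan : (√v₁ + √v₂) ^ 2 / (a + b) ≤ v₁ / a + v₂ / b := by
    simpa [Real.sq_sqrt hv₁, Real.sq_sqrt hv₂] using
      Finset.sq_sum_div_le_sum_sq_div Finset.univ ![√v₁, √v₂] (g := ![a, b])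
        (by simp [Fin.forall_fin_two, ha, hb])
  have hmean : (a + b) * (v / (a + b) ^ 2 + c / (a + b))
      ≤ a * (v₁ / a ^ 2 + c / a) + b * (v₂ / b ^ 2 + c / b) := by
    have hv_div : v / (a + b) ≤ v₁ / a + v₂ / b :=
      (div_le_div_of_nonneg_right hv_le (by positivity)).trans hsedrakyan
    field_simp at hv_div ⊢
    linarith [mul_nonneg (mul_nonneg (mul_nonneg ha.le hb.le) (add_pos ha hb).le) hc]
  have hmax : a * (v₁ / a ^ 2 + c / a) + b * (v₂ / b ^ 2 + c / b)
      ≤ (a + b) * max (v₁ / a ^ 2 + c / a) (v₂ / b ^ 2 + c / b) := by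
    rw [add_mul]
    gcongr
    exacts [le_max_left _ _, le_max_right _ _]
  exact le_of_mul_le_mul_left (hmean.trans hmax) (by positivity)

theorem ultrametric_Lambda_general {Ω : Type*} [MeasurableSpace Ω]
    (P : Measure Ω) [IsProbabilityMeasure P] (K : ℕ)
    (X : Fin K → Ω → ℝ) (hX : ∀ i, MemLp (X i) 2 P)
    (μ : Fin K → ℝ)
    (V : Fin K → Fin K → ℝ)
    (hV : ∀ i j, V i j = variance (fun ω => X i ω - X j ω) P)
    (Λ : Fin K → Fin K → ℝ≥0∞)
    (hΛ : ∀ i j, Λ i j =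
      if μ i < μ j then
        ENNReal.ofReal (V i j / (μ j - μ i) ^ 2 + 3 / (μ j - μ i)) else ⊤)
    (i j k : Fin K) :
    Λ i j ≤ max (Λ i k) (Λ k j) := by
  by_cases hik : μ i < μ k
  swap
  · simp [hΛ i k, hik]
  by_cases hkj : μ k < μ j
  swap
  · simp [hΛ k j, hkj]
  have hV_nonneg : ∀ i j, 0 ≤ V i j := fun i j ↦ hV i j ▸ variance_nonneg _ _
  have hsqrt : √(V i j) ≤ √(V i k) + √(V k j) := by
    have hsplit : (fun ω ↦ X i ω - X j ω)
        = (fun ω ↦ X i ω - X k ω) + fun ω ↦ X k ω - X j ω := by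
      ext ω
      simp only [Pi.add_apply]
      ring
    rw [hV, hV, hV, hsplit]
    exact sqrt_variance_add_le ((hX i).sub (hX k)) ((hX k).sub (hX j))
  have hgap : μ j - μ i = (μ k - μ i) + (μ j - μ k) := by ring
  rw [hΛ, hΛ, hΛ, if_pos (hik.trans hkj), if_pos hik, if_pos hkj, ← ENNReal.ofReal_max, hgap]
  exact ENNReal.ofReal_le_ofReal <| div_sq_add_div_le_max (hV_nonneg i j) (hV_nonneg i k)
    (hV_nonneg k j) hsqrt (sub_pos.2 hik) (sub_pos.2 hkj) zero_le_three

/-- Ultra-metric property of the quantities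
`Λ_{ij} = V_{ij}/(μ_j - μ_i)² + 3/(μ_j - μ_i)`
(with value `+∞` when `μ_j ≤ μ_i`), where `V_{ij} = Var(X_i - X_j)`. -/
theorem ultrametric_Lambda {Ω : Type*} [MeasurableSpace Ω]
    (P : Measure Ω) [IsProbabilityMeasure P] (K : ℕ)
    (X : Fin K → Ω → ℝ) (hX : ∀ i, MemLp (X i) 2 P)
    (μ : Fin K → ℝ) (hμ : ∀ i, μ i = ∫ ω, X i ω ∂P)
    (V : Fin K → Fin K → ℝ)
    (hV : ∀ i j, V i j = variance (fun ω => X i ω - X j ω) P)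
    (Λ : Fin K → Fin K → ℝ≥0∞)
    (hΛ : ∀ i j, Λ i j =
      if μ i < μ j then
        ENNReal.ofReal (V i j / (μ j - μ i) ^ 2 + 3 / (μ j - μ i)) else ⊤)
    (i j k : Fin K) :
    Λ i j ≤ max (Λ i k) (Λ k j) :=
  ultrametric_Lambda_general P K X hX μ V hV Λ hΛ i j k
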